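/- Under the run invariant, if z = 0, c_j = c_i and l_j > l_i, then c_j ≠ c_{i+1}, and: either c_j < c_{i+1} and c_k^{l_k} ⋯ c_{j-1}^{l_{j-1}} c_j^{l_j} ∉ P', or c_j > c_{i+1} and c_k^{l_k} ⋯ c_{j-1}^{l_{j-1}} c_j^{l_j} ∈ L' (in which case its longest border is empty, so the invariant holds for j+1 with ℓ' = 0). -/

import Mathlib

variable {α : Type*}

/-- The rotation `rot(w,i) = w[i..|w|-1] w[0..i-1]`. -/
def rot (w : List α) (i : ℕ) : List α := w.drop i ++ w.take i

/-- A Lyndon word: a nonempty word strictly smaller than all of its proper rotations. -/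
def IsLyndon [LinearOrder α] (w : List α) : Prop :=
  w ≠ [] ∧ ∀ i, 0 < i → i < w.length → w < rot w i

/-- `IsCFL w f` : `f` is the Chen–Fox–Lyndon factorization of `w`, i.e. a
nonincreasing sequence of Lyndon words whose concatenation is `w`. -/
def IsCFL [LinearOrder α] (w : List α) (f : List (List α)) : Prop :=
  f.flatten = w ∧ (∀ x ∈ f, IsLyndon x) ∧ f.Chain' (· ≥ ·)

/-- `u^k` : the `k`-fold concatenation of the word `u`. -/
def listPow (u : List α) (k : ℕ) : List α := (List.replicate k u).flatten

/-- `P`: the set of nonempty prefixes of Lyndon words. -/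
def InP [LinearOrder α] (w : List α) : Prop :=
  w ≠ [] ∧ ∃ u : List α, IsLyndon (w ++ u)

/-- `P' = P ∪ { c^k : k ≥ 2 }` where `c` is the maximum symbol of the alphabet. -/
def InP' [LinearOrder α] (w : List α) : Prop :=
  InP w ∨ ∃ (c : α) (k : ℕ), 2 ≤ k ∧ (∀ a : α, a ≤ c) ∧ w = List.replicate k c

/-- A border of `w`: a proper prefix of `w` that is also a suffix of `w`. -/
def IsBorder (b w : List α) : Prop := b <+: w ∧ b <:+ w ∧ b.length < w.length

/-- The length of the longest common prefix of two words. -/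
def lcpLen [DecidableEq α] : List α → List α → ℕ
  | a :: u, b :: v => if a = b then lcpLen u v + 1 else 0
  | _, _ => 0


/-- The number of runs in the run-length encoding of a word: the length of the
list obtained by collapsing consecutive equal symbols. -/
def numRuns [DecidableEq α] (w : List α) : ℕ := (w.destutter (· ≠ ·)).length

/-- An LR word: either a Lyndon word or a power `a^k` (`k ≥ 2`) of a single symbol. -/
def IsLR [LinearOrder α] (w : List α) : Prop :=
  IsLyndon w ∨ ∃ (a : α) (k : ℕ), 2 ≤ k ∧ w = List.replicate k a

/-- The word `c_k^{l_k} c_{k+1}^{l_{k+1}} ⋯ c_{j-1}^{l_{j-1}}` determined by the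
runs `(c_t, l_t)` for `k ≤ t < j`. -/
def runWord (c : ℕ → α) (l : ℕ → ℕ) (k j : ℕ) : List α :=
  ((List.range (j - k)).map (fun t => List.replicate (l (k + t)) (c (k + t)))).flatten

/-!
With `z = 0` the longest border `b` of `w = c_k^{l_k} ⋯ c_{j-1}^{l_{j-1}}` consists of exactly
the first `ℓ` runs of `w`, so `b c_i^{l_i} c_{i+1}` is a prefix of `w`. As `c_j = c_i` and
`l_j > l_i`, the extended word begins with `w c_i^{l_i} c_j`, whose suffix `b c_i^{l_i} c_j`
differs from its prefix `b c_i^{l_i} c_{i+1}` only in the last letter.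

If `c_j < c_{i+1}` this suffix is smaller than the word, which is impossible in a prefix of a
Lyndon word. If `c_j > c_{i+1}` we are in Duval's extension step: in a prefix `w` of a Lyndon
word every factor is at least as large as the prefix of `w` of the same length, and a proper
suffix of `w` that is also a prefix of `w` is a suffix of the longest border `b`; hence every
proper suffix of `w c_i^{l_i} c_j` is larger than the word, which is therefore Lyndon. Appending
more letters `c_j`, larger than its first letter, keeps it Lyndon, and Lyndon words are
unbordered.
-/

/-- Unlike `x < y`, this excludes `x` being a proper prefix of `y`, so it survives appending
arbitrary words to `x` and to `y`. -/
def MismatchLt [LT α] (x y : List α) : Prop :=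
  ∃ (p : List α) (a b : α) (x' y' : List α), a < b ∧ x = p ++ a :: x' ∧ y = p ++ b :: y'

namespace MismatchLt

variable [LinearOrder α] {x y : List α}

theorem lt (h : MismatchLt x y) : x < y := by
  obtain ⟨p, a, b, x', y', hab, rfl, rfl⟩ := h
  induction p with
  | nil => exact List.Lex.rel hab
  | cons _ _ ih => exact List.Lex.cons ih

theorem asymm (h : MismatchLt x y) (h' : MismatchLt y x) : False :=
  lt_asymm h.lt h'.lt

theorem of_isPrefix {x' y' : List α} (h : MismatchLt x y) (hx : x <+: x') (hy : y <+: y') :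
    MismatchLt x' y' := by
  obtain ⟨p, a, b, x₁, y₁, hab, rfl, rfl⟩ := h
  obtain ⟨r, rfl⟩ := hx
  obtain ⟨r', rfl⟩ := hy
  exact ⟨p, a, b, x₁ ++ r, y₁ ++ r', hab, by simp, by simp⟩

theorem of_append_left {z : List α} (h : MismatchLt (x ++ z) y) (hy : y.length ≤ x.length) :
    MismatchLt x y := by
  obtain ⟨p, a, b, x₁, y₁, hab, hx, rfl⟩ := h
  rcases List.append_eq_append_iff.1 hx with ⟨r, rfl, -⟩ | ⟨r, rfl, hr⟩
  · simp at hy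
  · obtain _ | ⟨a', r⟩ := r
    · simp at hy
    · obtain ⟨rfl, -⟩ := List.cons_eq_cons.1 hr
      exact ⟨p, a, b, r, y₁, hab, rfl, rfl⟩

theorem of_append_right_or_isPrefix {z : List α} (h : MismatchLt x (y ++ z)) :
    MismatchLt x y ∨ y <+: x := by
  obtain ⟨p, a, b, x₁, y₁, hab, rfl, hy⟩ := h
  rcases List.append_eq_append_iff.1 hy with ⟨r, rfl, -⟩ | ⟨r, rfl, hr⟩
  · exact Or.inr ((List.prefix_append y r).trans (List.prefix_append _ _))
  · obtain _ | ⟨b', r⟩ := r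
    · exact Or.inr (by simp)
    · obtain ⟨rfl, -⟩ := List.cons_eq_cons.1 hr
      exact Or.inl ⟨p, a, b, x₁, r, hab, rfl, rfl⟩

theorem concat_of_le {t : List α} {e a : α} (h : MismatchLt x (t ++ [e])) (hea : e ≤ a) :
    MismatchLt x (t ++ [a]) := by
  obtain ⟨p, f, g, x₁, y₁, hfg, rfl, ht⟩ := h
  rcases List.eq_nil_or_concat y₁ with rfl | ⟨y₂, e', rfl⟩
  · obtain ⟨rfl, he⟩ := List.append_inj' ht rfl
    obtain rfl : e = g := by simpa using he
    exact ⟨t, f, a, x₁, [], hfg.trans_le hea, rfl, rfl⟩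
  · have ht' : t ++ [e] = (p ++ g :: y₂) ++ [e'] := by simpa using ht
    obtain ⟨rfl, -⟩ := List.append_inj' ht' rfl
    exact ⟨p, f, g, x₁, y₂ ++ [a], hfg, rfl, by simp⟩

end MismatchLt

theorem mismatchLt_of_lt_of_length_le [LinearOrder α] {x y : List α} (h : x < y)
    (hl : y.length ≤ x.length) : MismatchLt x y := by
  induction h with
  | nil => simp at hl
  | rel hab => exact ⟨[], _, _, _, _, hab, rfl, rfl⟩
  | cons _ ih =>
    obtain ⟨p, a, b, x', y', hab, rfl, rfl⟩ := ih (by simpa using hl)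
    exact ⟨_ :: p, a, b, x', y', hab, rfl, rfl⟩

theorem List.lt_of_append_lt_append_left [LinearOrder α] {s t q : List α} (h : s ++ t < s ++ q) :
    t < q := by
  induction s with
  | nil => simpa using h
  | cons a s ih => exact ih (by simpa using h)

theorem isLyndon_of_mismatchLt_drop [LinearOrder α] {v : List α} (hv : v ≠ [])
    (h : ∀ p, 0 < p → p < v.length → MismatchLt v (v.drop p)) : IsLyndon v :=
  ⟨hv, fun p hp hpv => ((h p hp hpv).of_isPrefix (List.prefix_refl v)
    (List.prefix_append _ _)).lt⟩

namespace IsLyndon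

variable [LinearOrder α] {v : List α}

theorem eq_nil_of_isBorder {s : List α} (hv : IsLyndon v) (hs : IsBorder s v) : s = [] := by
  obtain ⟨⟨t, hst⟩, ⟨q, hqs⟩, hlen⟩ := hs
  by_contra hne
  have hs0 := List.length_pos_iff.2 hne
  have hlt := congrArg List.length hst
  have hlq := congrArg List.length hqs
  simp only [List.length_append] at hlt hlq
  have hrot (x y : List α) (h : x ++ y = v) : rot v x.length = y ++ x := by
    simp [rot, ← h]
  have h1 := hv.2 q.length (by omega) (by omega)
  have h2 := hv.2 s.length hs0 hlen
  rw [hrot q s hqs, ← hst] at h1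
  rw [hrot s t hst, ← hqs] at h2
  have htq := mismatchLt_of_lt_of_length_le (List.lt_of_append_lt_append_left h1) (by omega)
  exact lt_asymm h2 ((htq.of_isPrefix (List.prefix_append t s) (List.prefix_append q s)).lt)

theorem mismatchLt_drop (hv : IsLyndon v) {p : ℕ} (hp : 0 < p) (hpv : p < v.length) :
    MismatchLt v (v.drop p) := by
  have h := mismatchLt_of_lt_of_length_le (hv.2 p hp hpv)
    (by simp only [rot, List.length_append, List.length_drop, List.length_take]; omega)
  refine h.of_append_right_or_isPrefix.resolve_right fun hpre => ?_
  have := hv.eq_nil_of_isBorder ⟨hpre, List.drop_suffix p v, by rw [List.length_drop]; omega⟩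
  rw [List.drop_eq_nil_iff] at this
  omega

theorem append_singleton {c₀ a : α} (hv : IsLyndon (c₀ :: v)) (ha : c₀ < a) :
    IsLyndon (c₀ :: v ++ [a]) := by
  refine isLyndon_of_mismatchLt_drop (by simp) fun p hp hpv => ?_
  rcases lt_or_ge p (c₀ :: v).length with hpl | hpl
  · rw [List.drop_append_of_le_length hpl.le]
    exact (hv.mismatchLt_drop hp hpl).of_isPrefix (List.prefix_append _ _) (List.prefix_append _ _)
  · rw [List.length_append, List.length_singleton] at hpv
    rw [show p = (c₀ :: v).length by omega, List.drop_left]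
    exact ⟨[], c₀, a, v ++ [a], [], ha, rfl, rfl⟩

theorem append_replicate {x : List α} {a : α} (h : IsLyndon (x ++ [a])) (hx : x ≠ []) (n : ℕ) :
    IsLyndon (x ++ [a] ++ List.replicate n a) := by
  obtain ⟨c₀, x, rfl⟩ := List.exists_cons_of_ne_nil hx
  have ha : c₀ < a := by
    have h' := h.mismatchLt_drop (p := (c₀ :: x).length) (by simp) (by simp)
    rw [List.drop_left] at h'
    obtain ⟨_ | _, f, g, _, _, hfg, hv, hg⟩ := h'
    · obtain ⟨rfl, -⟩ := List.cons_eq_cons.1 hv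
      obtain ⟨rfl, -⟩ := List.cons_eq_cons.1 hg
      exact hfg
    · simp at hg
  induction n with
  | zero => simpa using h
  | succ n ih =>
    rw [List.replicate_succ', ← List.append_assoc]
    exact append_singleton (by simpa using ih) ha

end IsLyndon

def IsLongestBorder (b w : List α) : Prop :=
  IsBorder b w ∧ ∀ b' : List α, IsBorder b' w → b'.length ≤ b.length

section Extension

variable [LinearOrder α] {w b y : List α} {e a : α}

theorem IsLyndon.mismatchLt_of_infix {u t : List α} (hV : IsLyndon (w ++ u))
    (ht : t ++ [e] <:+: w) (hea : e < a) : MismatchLt w (t ++ [a]) := by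
  obtain ⟨p, r, hw⟩ := ht
  have hocc : MismatchLt (w ++ u) (t ++ [e]) ∨ t ++ [e] <+: w ++ u := by
    rcases eq_or_ne p [] with rfl | hp
    · exact Or.inr ⟨r ++ u, by simp [← hw]⟩
    · have h := hV.mismatchLt_drop (p := p.length) (List.length_pos_iff.2 hp) (by simp [← hw])
      rw [show (w ++ u).drop p.length = t ++ [e] ++ (r ++ u) by simp [← hw]] at h
      exact h.of_append_right_or_isPrefix
  refine MismatchLt.of_append_left (z := u) ?_ (by grind)
  rcases hocc with h | ⟨r', hr'⟩
  · exact h.concat_of_le hea.le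
  · exact ⟨t, e, a, r', [], hea, by simp [← hr'], rfl⟩

theorem InP.isLyndon_append (hw : InP w) (hb : IsLongestBorder b w)
    (hpre : b ++ y ++ [e] <+: w) (hea : e < a) : IsLyndon (w ++ y ++ [a]) := by
  obtain ⟨-, u, hV⟩ := hw
  obtain ⟨⟨-, hbw, -⟩, hbmax⟩ := hb
  have hocc (P t : List α) (h : P ++ t ++ [e] <+: w) : MismatchLt (w ++ y ++ [a]) (t ++ [a]) :=
    (hV.mismatchLt_of_infix ((List.suffix_append P _).isInfix.trans
      (by simpa using h.isInfix)) hea).of_isPrefix (by simp) (List.prefix_refl _)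
  refine isLyndon_of_mismatchLt_drop (by simp) fun p hp hpx => ?_
  rcases lt_or_ge p w.length with hpw | hpw
  · rw [List.append_assoc, List.drop_append_of_le_length hpw.le]
    have h := hV.mismatchLt_drop hp (by rw [List.length_append]; omega)
    rw [List.drop_append_of_le_length hpw.le] at h
    rcases h.of_append_right_or_isPrefix with h | hs
    · exact (h.of_append_left (by simp)).of_isPrefix (List.prefix_append w _)
        (List.prefix_append _ _)
    · have hsw : w.drop p <+: w := (List.isPrefix_append_of_length (by simp)).1 hs
      obtain ⟨b', hb'⟩ := List.suffix_of_suffix_length_le (List.drop_suffix p w) hbw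
        (hbmax _ ⟨hsw, List.drop_suffix p w, by rw [List.length_drop]; omega⟩)
      simpa using hocc b' (w.drop p ++ y) (by simpa [← hb'] using hpre)
  · have hq : (w ++ y ++ [a]).drop p = y.drop (p - w.length) ++ [a] := by
      simp only [List.length_append, List.length_singleton] at hpx
      rw [List.append_assoc, List.drop_append, List.drop_eq_nil_of_le hpw, List.nil_append,
        List.drop_append_of_le_length (by omega)]
    rw [hq]
    rw [← List.take_append_drop (p - w.length) y] at hpre
    exact hocc (b ++ y.take (p - w.length)) _ (by simpa only [List.append_assoc] using hpre)

theorem not_inP_append_of_isBorder (hb : IsBorder b w) (hpre : b ++ y ++ [e] <+: w)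
    (hae : a < e) : ¬ InP (w ++ y ++ [a]) := by
  rintro ⟨-, u, hV⟩
  obtain ⟨-, ⟨p, rfl⟩, hlen⟩ := hb
  obtain ⟨r, hr⟩ := hpre
  have h := hV.mismatchLt_drop (p := p.length) (by rw [List.length_append] at hlen; omega) (by simp)
  refine h.asymm ⟨b ++ y, a, e, u, r ++ y ++ [a] ++ u, hae, by simp, ?_⟩
  rw [← hr]
  simp

end Extension

theorem InP.of_append [LinearOrder α] {x z : List α} (h : InP (x ++ z)) (hx : x ≠ []) : InP x := by
  obtain ⟨-, u, hu⟩ := h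
  exact ⟨hx, z ++ u, by simpa using hu⟩

theorem inP'_iff_inP [LinearOrder α] {w : List α} {a b : α} (ha : a ∈ w) (hb : b ∈ w)
    (hab : a ≠ b) : InP' w ↔ InP w := by
  refine ⟨fun h => h.resolve_right ?_, Or.inl⟩
  rintro ⟨c, n, -, -, rfl⟩
  exact hab ((List.eq_of_mem_replicate ha).trans (List.eq_of_mem_replicate hb).symm)

theorem List.append_replicate_inj_of_getLast?_ne {y y' : List α} {a a' : α} {m m' : ℕ} (hm : 0 < m)
    (hm' : 0 < m') (hy : y.getLast? ≠ some a) (hy' : y'.getLast? ≠ some a')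
    (h : y ++ List.replicate m a = y' ++ List.replicate m' a') : a = a' ∧ m = m' := by
  have ha := congrArg List.getLast? h
  simp only [List.getLast?_append, List.getLast?_replicate, hm.ne', hm'.ne', if_false,
    Option.some_or, Option.some.injEq] at ha
  subst ha
  have hle {y y' : List α} {m m' : ℕ} (hy : y.getLast? ≠ some a)
      (h : y ++ List.replicate m a = y' ++ List.replicate m' a) : m' ≤ m := by
    by_contra! hlt
    rw [show m' = m' - m + m by omega, List.replicate_add, ← List.append_assoc] at h
    apply hy
    simp [List.append_cancel_right h, List.getLast?_replicate, show m' - m ≠ 0 by omega]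
  exact ⟨rfl, le_antisymm (hle hy' h.symm) (hle hy h)⟩

section RunWord

variable (c : ℕ → α) (l : ℕ → ℕ)

@[simp]
theorem runWord_self (k : ℕ) : runWord c l k k = [] := by
  simp [runWord]

theorem runWord_succ {k j : ℕ} (h : k ≤ j) :
    runWord c l k (j + 1) = runWord c l k j ++ List.replicate (l j) (c j) := by
  simp [runWord, show j + 1 - k = j - k + 1 by omega, List.range_succ,
    show k + (j - k) = j by omega]

theorem runWord_append {k t j : ℕ} (hkt : k ≤ t) (htj : t ≤ j) :
    runWord c l k j = runWord c l k t ++ runWord c l t j := by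
  induction j, htj using Nat.le_induction with
  | base => simp
  | succ j htj ih =>
    rw [runWord_succ c l (hkt.trans htj), runWord_succ c l htj, ih, List.append_assoc]

theorem runWord_cons {k j : ℕ} (h : k < j) :
    runWord c l k j = List.replicate (l k) (c k) ++ runWord c l (k + 1) j := by
  rw [runWord_append c l k.le_succ h, runWord_succ c l le_rfl, runWord_self, List.nil_append]

theorem mem_runWord {k t j : ℕ} (hkt : k ≤ t) (htj : t < j) (hl : 0 < l t) :
    c t ∈ runWord c l k j := by
  simp only [runWord, List.mem_flatten, List.mem_map, List.mem_range]
  exact ⟨_, ⟨t - k, by omega, rfl⟩, by simp [show k + (t - k) = t by omega, hl.ne']⟩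

theorem getLast?_runWord_succ {k j : ℕ} (h : k ≤ j) (hl : 0 < l j) :
    (runWord c l k (j + 1)).getLast? = some (c j) := by
  simp [runWord_succ c l h, List.getLast?_replicate, hl.ne']

theorem runWord_append_singleton_isPrefix {k i j : ℕ} (hki : k ≤ i) (hij : i + 1 < j)
    (hl : 0 < l (i + 1)) : runWord c l k (i + 1) ++ [c (i + 1)] <+: runWord c l k j := by
  rw [runWord_append c l (show k ≤ i + 1 by omega) hij.le, runWord_cons c l hij,
    List.prefix_append_right_inj]
  exact List.prefix_append_of_prefix (List.prefix_replicate_iff.2 ⟨hl, by simp⟩)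

theorem runWord_succ_split {k j n : ℕ} (hkj : k ≤ j) (hn : n < l j) :
    runWord c l k (j + 1) = runWord c l k j ++ List.replicate n (c j) ++ [c j]
      ++ List.replicate (l j - n - 1) (c j) := by
  rw [runWord_succ c l hkj, List.append_assoc, List.append_assoc, List.singleton_append,
    ← List.replicate_succ, ← List.replicate_add]
  congr 2
  omega

theorem eq_runWord_append_replicate_of_isPrefix {k j : ℕ} {p : List α} (hkj : k ≤ j)
    (hp : p <+: runWord c l k j) (hne : p ≠ []) :
    ∃ t m, k ≤ t ∧ t < j ∧ 0 < m ∧ m ≤ l t ∧ p = runWord c l k t ++ List.replicate m (c t) := by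
  induction j, hkj using Nat.le_induction with
  | base => simp_all
  | succ j hkj ih =>
    rw [runWord_succ c l hkj] at hp
    rcases le_or_gt p.length (runWord c l k j).length with hpl | hpl
    · obtain ⟨t, m, hkt, htj, h⟩ := ih ((List.isPrefix_append_of_length hpl).1 hp)
      exact ⟨t, m, hkt, by omega, h⟩
    · refine ⟨j, min (p.length - (runWord c l k j).length) (l j), hkj, by omega, ?_, by omega, ?_⟩
      · have := hp.length_le
        simp only [List.length_append, List.length_replicate] at this
        omega
      · have h := List.prefix_iff_eq_take.1 hp
        rwa [List.take_append, List.take_of_length_le hpl.le, List.take_replicate] at h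

end RunWord

section NumRuns

variable [DecidableEq α]

@[simp]
theorem numRuns_nil : numRuns ([] : List α) = 0 := rfl

theorem numRuns_replicate_append {a : α} {m : ℕ} (hm : 0 < m) {x : List α}
    (hx : x.head? ≠ some a) : numRuns (List.replicate m a ++ x) = numRuns x + 1 := by
  obtain ⟨n, rfl⟩ : ∃ n, m = n + 1 := ⟨m - 1, by omega⟩
  have hdrop : ∀ n, (List.replicate n a ++ x).destutter' (· ≠ ·) a = x.destutter' (· ≠ ·) a := by
    intro n
    induction n with
    | zero => rfl
    | succ n ih => rwa [List.replicate_succ, List.cons_append, List.destutter'_cons_neg _ (by simp)]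
  rw [numRuns, List.replicate_succ, List.cons_append, List.destutter_cons', hdrop]
  cases x with
  | nil => rfl
  | cons b x =>
    rw [List.destutter'_cons_pos _ (by simpa [eq_comm] using hx)]
    simp [numRuns, List.destutter_cons']

theorem numRuns_runWord_append_replicate (c : ℕ → α) (l : ℕ → ℕ) {k t m : ℕ} (hkt : k ≤ t)
    (hl : ∀ s, k ≤ s → s < t → 0 < l s) (hc : ∀ s, k ≤ s → s < t → c s ≠ c (s + 1))
    (hm : 0 < m) : numRuns (runWord c l k t ++ List.replicate m (c t)) = t - k + 1 := by
  obtain ⟨d, rfl⟩ := Nat.exists_eq_add_of_le hkt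
  induction d generalizing k with
  | zero => simpa using numRuns_replicate_append (a := c k) hm (x := []) (by simp)
  | succ d ih =>
    have hhead : (runWord c l (k + 1) (k + 1 + d) ++ List.replicate m (c (k + 1 + d))).head?
        = some (c (k + 1)) := by
      cases d with
      | zero => simp [List.head?_replicate, hm.ne']
      | succ d =>
        simp [runWord_cons c l (show k + 1 < k + 1 + (d + 1) by omega), List.head?_replicate,
          (hl (k + 1) (by omega) (by omega)).ne']
    rw [runWord_cons c l (by omega), List.append_assoc, show k + (d + 1) = k + 1 + d by omega,
      numRuns_replicate_append (hl k le_rfl (by omega)), ih (by omega)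
        (fun s h1 h2 => hl s (by omega) (by omega)) (fun s h1 h2 => hc s (by omega) (by omega))]
    · omega
    · rw [hhead]; simpa using (hc k le_rfl (by omega)).symm

end NumRuns

theorem IsLongestBorder.eq_runWord [DecidableEq α] {c : ℕ → α} {l : ℕ → ℕ} {k j : ℕ}
    {b : List α} (hkj : k + 1 < j) (hl : ∀ t, k ≤ t → t < j → 0 < l t)
    (hc : ∀ t, k ≤ t → t + 1 < j → c t ≠ c (t + 1)) (hb : IsLongestBorder b (runWord c l k j))
    (hz : 0 < numRuns b → l (k + numRuns b - 1) ≤ l (j - 1)) :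
    b = runWord c l k (k + numRuns b) ∧ k + numRuns b < j := by
  obtain ⟨⟨hpre, hsuf, hlen⟩, hmax⟩ := hb
  rcases eq_or_ne b [] with rfl | hne
  · exact ⟨by simp, by rw [numRuns_nil]; omega⟩
  obtain ⟨t, m, hkt, htj, hm, hmt, rfl⟩ :=
    eq_runWord_append_replicate_of_isPrefix c l (by omega) hpre hne
  rw [numRuns_runWord_append_replicate c l hkt (fun s h1 h2 => hl s h1 (by omega))
    (fun s h1 h2 => hc s h1 (by omega)) hm, show k + (t - k + 1) = t + 1 by omega] at hz ⊢
  obtain ⟨J, rfl⟩ : ∃ J, j = J + 1 := ⟨j - 1, by omega⟩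
  have hlt : l t ≤ l J := by simpa [show t + 1 - 1 = t by omega] using hz
  obtain ⟨u, hsuf⟩ := hsuf
  rw [runWord_succ c l (by omega)] at hsuf
  have hmt : m = l t := by
    rcases hkt.eq_or_lt with rfl | hkt
    -- `b` is a power of `c_k`, so `c_k^{l_k}` is a border as well
    · have hcJ : c k = c J := by
        simpa [List.getLast?_replicate, hm.ne', (hl J (by omega) (by omega)).ne', eq_comm] using
          congrArg List.getLast? hsuf
      have hborder : IsBorder (List.replicate (l k) (c k)) (runWord c l k (J + 1)) := by
        refine ⟨?_, ?_, ?_⟩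
        · rw [runWord_cons c l (by omega)]
          exact List.prefix_append _ _
        · rw [runWord_succ c l (by omega), hcJ]
          exact (List.suffix_replicate_iff.2 ⟨by simpa using hlt, by simp⟩).trans
            (List.suffix_append _ _)
        · have := List.length_pos_of_mem (mem_runWord c l (le_refl (k + 1)) (by omega)
            (hl (k + 1) (by omega) (by omega)))
          rw [runWord_cons c l (by omega)]
          simp only [List.length_append, List.length_replicate]
          omega
      have := hmax _ hborder
      simp only [List.length_replicate, runWord_self, List.nil_append] at this
      omega
    -- the last run of `b` is maximal in `b`, so it is the whole last run of `w`
    · obtain ⟨T, rfl⟩ : ∃ T, t = T + 1 := ⟨t - 1, by omega⟩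
      have hlast (s : ℕ) (hs : k < s) (hsJ : s ≤ J) :
          (runWord c l k s).getLast? ≠ some (c s) := by
        obtain ⟨S, rfl⟩ : ∃ S, s = S + 1 := ⟨s - 1, by omega⟩
        rw [getLast?_runWord_succ c l (by omega) (hl S (by omega) (by omega))]
        simpa using hc S (by omega) (by omega)
      have hu : (u ++ runWord c l k (T + 1)).getLast? ≠ some (c (T + 1)) := by
        have := getLast?_runWord_succ c l (show k ≤ T by omega) (hl T (by omega) (by omega))
        simpa [List.getLast?_append, this] using hlast (T + 1) hkt (by omega)
      have := List.append_replicate_inj_of_getLast?_ne hm (hl J (by omega) (by omega)) hu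
        (hlast J (by omega) le_rfl) (by simpa using hsuf)
      omega
  subst hmt
  refine ⟨(runWord_succ c l hkt).symm, ?_⟩
  by_contra hJ
  rw [show t = J by omega] at hlen
  simp [runWord_succ c l (show k ≤ J by omega)] at hlen

theorem rle_next_case4_general [LinearOrder α] (c : ℕ → α) (l : ℕ → ℕ) (k j : ℕ) (hkj : k < j)
    (hlpos : ∀ t, k ≤ t → t ≤ j → 1 ≤ l t)
    (hcne : ∀ t, k ≤ t → t < j → c t ≠ c (t + 1))
    (hP' : InP' (runWord c l k j))
    (b : List α) (hb : IsBorder b (runWord c l k j))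
    (hbmax : ∀ b' : List α, IsBorder b' (runWord c l k j) → b'.length ≤ b.length)
    (ℓ i z : ℕ)
    (hℓ : ℓ = if 1 < j - k then numRuns b else 0)
    (hi : i = k + ℓ)
    (hz : z = if 0 < ℓ ∧ l (j - 1) < l (i - 1) then 1 else 0)
    (hz0 : z = 0) (hceq : c j = c i) (hgt : l i < l j) :
    c j ≠ c (i + 1) ∧
      ((c j < c (i + 1) ∧ ¬ InP' (runWord c l k (j + 1))) ∨
       (c (i + 1) < c j ∧ IsLR (runWord c l k (j + 1)) ∧
         ∀ b' : List α, IsBorder b' (runWord c l k (j + 1)) → b' = [])) := by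
  have hkj' : k + 1 < j := by
    by_contra
    obtain rfl : j = k + 1 := by omega
    exact hcne k le_rfl hkj (by simpa [hi, hℓ] using hceq.symm)
  have hℓb : ℓ = numRuns b := by simp [hℓ, show 1 < j - k by omega]
  obtain ⟨hbi, hij⟩ := IsLongestBorder.eq_runWord hkj' (fun t h1 h2 => hlpos t h1 h2.le)
    (fun t h1 h2 => hcne t h1 (by omega)) ⟨hb, hbmax⟩ (by subst hℓb hi; simpa [hz] using hz0)
  rw [← hℓb, ← hi] at hbi hij
  have hci : c j ≠ c (i + 1) := hceq ▸ hcne i (by omega) hij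
  have hi1 : i + 1 < j := by
    by_contra
    exact hci (by rw [show j = i + 1 by omega])
  have hpre : b ++ List.replicate (l i) (c j) ++ [c (i + 1)] <+: runWord c l k j := by
    rw [hceq, hbi, ← runWord_succ c l (by omega)]
    exact runWord_append_singleton_isPrefix c l (by omega) hi1 (hlpos (i + 1) (by omega) (by omega))
  have hsplit := runWord_succ_split c l hkj.le hgt
  have hck := mem_runWord c l le_rfl hkj (hlpos k le_rfl hkj.le)
  have hP (x : List α) (hx : runWord c l k j <+: x) : InP' x ↔ InP x :=
    inP'_iff_inP (hx.subset hck)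
      (hx.subset (mem_runWord c l k.le_succ hkj' (hlpos (k + 1) (by omega) (by omega))))
      (hcne k le_rfl hkj)
  refine ⟨hci, (lt_or_gt_of_ne hci).imp (fun hlt => ⟨hlt, ?_⟩) fun hlt => ?_⟩
  · rw [hsplit, hP _ (by simp)]
    exact fun h => not_inP_append_of_isBorder hb hpre hlt (h.of_append (by simp))
  · have hL : IsLyndon (runWord c l k (j + 1)) := by
      rw [hsplit]
      exact (((hP _ (List.prefix_refl _)).1 hP').isLyndon_append ⟨hb, hbmax⟩ hpre
        hlt).append_replicate (by simp [List.ne_nil_of_mem hck]) _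
    exact ⟨hlt, Or.inl hL, fun b' hb' => hL.eq_nil_of_isBorder hb'⟩

/-- Under the run invariant, if `z = 0`, `c_j = c_i` and `l_j > l_i`, then
`c_j ≠ c_{i+1}` and: either `c_j < c_{i+1}` and the extended word is not in `P'`,
or `c_j > c_{i+1}` and the extended word is in `L'` with empty longest border. -/
theorem rle_next_case4 [LinearOrder α] (c : ℕ → α) (l : ℕ → ℕ) (k j : ℕ) (hkj : k < j)
    (hlpos : ∀ t, k ≤ t → t ≤ j → 1 ≤ l t)
    (hcne : ∀ t, k ≤ t → t < j → c t ≠ c (t + 1))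
    (hP' : InP' (runWord c l k j))
    (b : List α) (hb : IsBorder b (runWord c l k j))
    (hbmax : ∀ b' : List α, IsBorder b' (runWord c l k j) → b'.length ≤ b.length)
    (ℓ i z s : ℕ)
    (hℓ : ℓ = if 1 < j - k then numRuns b else 0)
    (hi : i = k + ℓ)
    (hz : z = if 0 < ℓ ∧ l (j - 1) < l (i - 1) then 1 else 0)
    (hs : s = i - z)
    (hz0 : z = 0) (hceq : c j = c i) (hgt : l i < l j) :
    c j ≠ c (i + 1) ∧
      ((c j < c (i + 1) ∧ ¬ InP' (runWord c l k (j + 1))) ∨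
       (c (i + 1) < c j ∧ IsLR (runWord c l k (j + 1)) ∧
         ∀ b' : List α, IsBorder b' (runWord c l k (j + 1)) → b' = [])) :=
  rle_next_case4_general c l k j hkj hlpos hcne hP' b hb hbmax ℓ i z hℓ hi hz hz0 hceq hgt
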